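/- arXiv:1706.05827 — 2 statements merged into one kernel-verified Lean document; each statement's English description precedes it below -/
import Mathlib

section
/- Let X and Y be subshifts of Q^M and let Δ be a local map from X to Y. Then the image Δ(X) is a subshift of Q^M. -/
/-!
In the prodiscrete topology a subshift `X` is closed, hence compact, and invariant under `H`.
A local map `Δ` is continuous, because its memory set lies in a finite ball, and it commutes
with the action of `H`: since the coordinates `g_{m₀,m}` lie in `H`, moving the local rule from
`m` to `h ▷ m` only twists it by an element of `H ∩ G₀`, under which `δ` is invariant. So `Δ(X)`
is compact, hence closed, and `H`-invariant, and such a set is the subshift whose forbidden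
blocks are the blocks that do not semi-occur in it.
-/

open Filter Set

namespace GoE

variable {G M Q : Type*}

/-- A left homogeneous space `⟨M, G, ▷⟩` together with a coordinate system
`⟨m₀, (g_{m₀,m})_{m∈M}⟩`: a cell space with finite stabiliser `G₀` of `m₀`. -/
structure CellSpace (G M : Type*) [Group G] where
  act : G → M → M
  one_act : ∀ m : M, act 1 m = m
  mul_act : ∀ (g h : G) (m : M), act (g * h) m = act g (act h m)
  transitive : ∀ m m' : M, ∃ g : G, act g m = m'
  m0 : M
  coord : M → G
  coord_act : ∀ m : M, act (coord m) m0 = m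
  stab_finite : {g : G | act g m0 = m0}.Finite

variable [Group G]

namespace CellSpace

/-- Membership in the stabiliser `G₀` of `m₀`. -/
def stab (R : CellSpace G M) (g : G) : Prop := R.act g R.m0 = R.m0

/-- The induced right semi-action `m ↝ gG₀ = g_{m₀,m} g ▷ m₀`, on representatives. -/
def sAct (R : CellSpace G M) (m : M) (g : G) : M := R.act (R.coord m * g) R.m0

/-- `m ↝ ι n` where `ι : M → G/G₀`, `n ↦ G_{m₀,n}` is the canonical identification. -/
def nAct (R : CellSpace G M) (m n : M) : M := R.act (R.coord m * R.coord n) R.m0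

/-- `S ⊆ G` represents a finite symmetric right generating set of cosets
(`G₀ · S ⊆ S`, `S⁻¹ ⊆ S`, and `S` generates). -/
structure IsRightGenSet (R : CellSpace G M) (S : Set G) : Prop where
  finite : S.Finite
  saturated : ∀ s ∈ S, ∀ g₀ : G, R.stab g₀ → s * g₀ ∈ S
  stab_mul : ∀ g₀ : G, R.stab g₀ → ∀ s ∈ S, g₀ * s ∈ S
  symm : ∀ s ∈ S, s⁻¹ ∈ S
  generates : ∀ m : M, ∃ (k : ℕ) (f : ℕ → M), f 0 = R.m0 ∧ f k = m ∧
    ∀ i < k, ∃ s ∈ S, f (i + 1) = R.sAct (f i) s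

/-- There is an `S`-path of length `n` from `m` to `m'` in the `S`-Cayley graph. -/
def Chain (R : CellSpace G M) (S : Set G) (m m' : M) (n : ℕ) : Prop :=
  ∃ f : ℕ → M, f 0 = m ∧ f n = m' ∧ ∀ i < n, ∃ s ∈ S, f (i + 1) = R.sAct (f i) s

/-- The `S`-metric `d`. -/
noncomputable def dist (R : CellSpace G M) (S : Set G) (m m' : M) : ℕ :=
  sInf {n : ℕ | R.Chain S m m' n}

/-- The ball `B(m, ρ)` of radius `ρ` centred at `m`. -/
noncomputable def ball (R : CellSpace G M) (S : Set G) (m : M) (ρ : ℕ) : Set M :=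
  {m' : M | R.dist S m m' ≤ ρ}

/-- The `θ`-interior `A^{-θ}` of `A`. -/
noncomputable def inter (R : CellSpace G M) (S : Set G) (A : Set M) (θ : ℕ) : Set M :=
  {m ∈ A | R.ball S m θ ⊆ A}

/-- The `θ`-closure `A^{+θ}` of `A`. -/
noncomputable def clos (R : CellSpace G M) (S : Set G) (A : Set M) (θ : ℕ) : Set M :=
  {m : M | (R.ball S m θ ∩ A).Nonempty}

/-- The external `θ`-boundary `∂θ⁺A = A^{+θ} ∖ A`. -/
noncomputable def extB (R : CellSpace G M) (S : Set G) (A : Set M) (θ : ℕ) : Set M :=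
  R.clos S A θ \ A

/-- The internal `θ`-boundary `∂θ⁻A = A ∖ A^{-θ}`. -/
noncomputable def intB (R : CellSpace G M) (S : Set G) (A : Set M) (θ : ℕ) : Set M :=
  A \ R.inter S A θ

/-- The `θ`-boundary `∂θA = A^{+θ} ∖ A^{-θ}`. -/
noncomputable def bdry (R : CellSpace G M) (S : Set G) (A : Set M) (θ : ℕ) : Set M :=
  R.clos S A θ \ R.inter S A θ

end CellSpace

/-- The set `X_A` of restrictions to `A` of the elements of `X`. -/
def restr (A : Set M) (X : Set (M → Q)) : Set (A → Q) :=
  (fun x : M → Q => A.restrict x) '' X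

/-- The pattern `p` (with domain `A`) semi-occurs in the configuration `c`:
there is `h ∈ H` with `h ⊛ p = c↾_{h ▷ dom p}`. -/
def SemiOccurs (R : CellSpace G M) (H : Subgroup G) {A : Set M} (p : A → Q)
    (c : M → Q) : Prop :=
  ∃ h ∈ H, ∀ a : A, c (R.act h ↑a) = p a

/-- The pattern `p` (with domain `A`) occurs at `t` in the configuration `c`:
`t ⊛' p = c↾_{t ↝ A}`. -/
def OccursAt (R : CellSpace G M) {A : Set M} (p : A → Q) (t : M) (c : M → Q) : Prop :=
  ∀ a : A, c (R.nAct t ↑a) = p a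

/-- The pattern `p` is allowed in `X`: it semi-occurs in some point of `X`. -/
def Allowed (R : CellSpace G M) (H : Subgroup G) (X : Set (M → Q)) {A : Set M}
    (p : A → Q) : Prop :=
  ∃ x ∈ X, SemiOccurs R H p x

/-- The set `⟨𝔉⟩` generated by a set `𝔉` of forbidden patterns. -/
def Generated (R : CellSpace G M) (H : Subgroup G) (𝔉 : Set (Σ A : Set M, A → Q)) :
    Set (M → Q) :=
  {c : M → Q | ∀ f ∈ 𝔉, ¬ SemiOccurs R H f.2 c}

/-- `X` is a subshift of `Q^M`: it is generated by a set of blocks. -/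
def IsSubshift (R : CellSpace G M) (H : Subgroup G) (X : Set (M → Q)) : Prop :=
  ∃ 𝔉 : Set (Σ A : Set M, A → Q), (∀ f ∈ 𝔉, f.1.Finite) ∧ X = Generated R H 𝔉

/-- `X` is a subshift of finite type: it is generated by a finite set of blocks. -/
def IsSubshiftFT (R : CellSpace G M) (H : Subgroup G) (X : Set (M → Q)) : Prop :=
  ∃ 𝔉 : Set (Σ A : Set M, A → Q), 𝔉.Finite ∧ (∀ f ∈ 𝔉, f.1.Finite) ∧
    X = Generated R H 𝔉

/-- `X` is a `κ`-step subshift: it is generated by a set of `B(κ)`-blocks. -/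
def IsStep (R : CellSpace G M) (S : Set G) (H : Subgroup G) (X : Set (M → Q))
    (κ : ℕ) : Prop :=
  ∃ 𝔉 : Set (Σ A : Set M, A → Q), (∀ f ∈ 𝔉, f.1 = R.ball S R.m0 κ) ∧
    X = Generated R H 𝔉

/-- `X` is `κ`-strongly irreducible. -/
def IsStronglyIrr (R : CellSpace G M) (S : Set G) (H : Subgroup G)
    (X : Set (M → Q)) (κ : ℕ) : Prop :=
  ∀ (A B : Set M), A.Finite → B.Finite → ∀ (p : A → Q) (p' : B → Q),
    Allowed R H X p → Allowed R H X p' →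
    (∀ a ∈ A, ∀ b ∈ B, κ + 1 ≤ R.dist S a b) →
    ∃ x ∈ X, A.restrict x = p ∧ B.restrict x = p'

/-- `X` has `ρ`-bounded propagation. -/
def HasBoundedProp (R : CellSpace G M) (S : Set G) (X : Set (M → Q)) (ρ : ℕ) : Prop :=
  ∀ F : Set M, F.Finite → ∀ p : F → Q,
    (∀ f ∈ F, ∃ x ∈ X, ∀ (m : M) (hm : m ∈ R.ball S f ρ ∩ F), p ⟨m, hm.2⟩ = x m) →
    ∃ x ∈ X, F.restrict x = p

/-- `Δ` is a `κ`-local map from `X` to `Y`. -/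
def IsLocalMap (R : CellSpace G M) (S : Set G) (H : Subgroup G)
    (X Y : Set (M → Q)) (Δ : (M → Q) → (M → Q)) (κ : ℕ) : Prop :=
  Set.MapsTo Δ X Y ∧
  ∃ N : Set M, N ⊆ R.ball S R.m0 κ ∧
    (∀ g₀ : G, R.stab g₀ → ∀ n ∈ N, R.act g₀ n ∈ N) ∧
    ∃ δ : (N → Q) → Q,
      (∀ h₀ ∈ H, R.stab h₀ →
        ∀ ℓ ∈ restr N X, ∀ ℓ' : N → Q,
          (∀ (n : M) (hn : n ∈ N) (hn' : R.act h₀⁻¹ n ∈ N),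
            ℓ' ⟨n, hn⟩ = ℓ ⟨R.act h₀⁻¹ n, hn'⟩) →
          δ ℓ' = δ ℓ) ∧
      ∀ x ∈ X, ∀ m : M, Δ x m = δ (fun n : N => x (R.nAct m ↑n))

/-- `Δ` is pre-injective on `X`. -/
def PreInjective (X : Set (M → Q)) (Δ : (M → Q) → (M → Q)) : Prop :=
  ∀ x ∈ X, ∀ x' ∈ X, Δ x = Δ x' → {m : M | x m ≠ x' m}.Finite → x = x'

/-- The cell space `R` is right amenable: there is a finitely additive probability
measure on the power set of `M` that is semi-invariant under the right semi-action. -/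
def RightAmenable (R : CellSpace G M) : Prop :=
  ∃ μ : Set M → ℝ, (∀ A : Set M, 0 ≤ μ A) ∧ μ Set.univ = 1 ∧
    (∀ A B : Set M, Disjoint A B → μ (A ∪ B) = μ A + μ B) ∧
    ∀ (g : G) (A : Set M), Set.InjOn (fun m => R.sAct m g) A →
      μ ((fun m => R.sAct m g) '' A) = μ A

/-- `F` is a right Følner net in `R` (indexed by the directed set `I`). -/
def IsFolnerNet (R : CellSpace G M) (S : Set G) {I : Type*} [Preorder I]
    (F : I → Set M) : Prop :=
  (∀ i, (F i).Nonempty) ∧ (∀ i, (F i).Finite) ∧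
  ∀ ρ : ℕ, Tendsto (fun i => ((R.bdry S (F i) ρ).ncard : ℝ) / ((F i).ncard : ℝ))
    atTop (nhds 0)

/-- The entropy of `X ⊆ Q^M` with respect to the net `F`:
`limsup_i log|X_{F_i}| / |F_i|`. -/
noncomputable def entropy (R : CellSpace G M) (S : Set G) {I : Type*} [Preorder I]
    (F : I → Set M) (X : Set (M → Q)) : ℝ :=
  limsup (fun i => Real.log ((restr (F i) X).ncard : ℝ) / ((F i).ncard : ℝ)) atTop

/-- `T` is a `⟨θ, κ, θ'⟩`-tiling of `R`. -/
def IsTiling (R : CellSpace G M) (S : Set G) (θ κ θ' : ℕ) (T : Set M) : Prop :=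
  (∀ t ∈ T, ∀ t' ∈ T, t ≠ t' →
    ∀ a ∈ R.ball S t θ, ∀ b ∈ R.ball S t' θ, κ + 1 ≤ R.dist S a b) ∧
  ∀ m : M, ∃ t ∈ T, m ∈ R.ball S t θ'

/-- The action `h ⊛ c` of `h ∈ G` on configurations: `(h ⊛ c)(m) = c(h⁻¹ ▷ m)`. -/
def shiftAct (R : CellSpace G M) (h : G) (c : M → Q) : M → Q :=
  fun m => c (R.act h⁻¹ m)
namespace CellSpace

variable (R : CellSpace G M)

lemma stab_inv {g : G} (hg : R.stab g) : R.stab g⁻¹ := by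
  unfold stab at *
  conv_lhs => rw [← hg]
  rw [← R.mul_act, inv_mul_cancel, R.one_act]

lemma act_coord_inv (m : M) : R.act (R.coord m)⁻¹ m = R.m0 := by
  nth_rewrite 2 [← R.coord_act m]
  rw [← R.mul_act, inv_mul_cancel, R.one_act]

lemma nAct_eq_act_coord (m n : M) : R.nAct m n = R.act (R.coord m) n := by
  rw [nAct, R.mul_act, R.coord_act]

lemma finite_setOf_chain {S : Set G} (hS : S.Finite) (m : M) (n : ℕ) :
    {m' : M | R.Chain S m m' n}.Finite := by
  induction n with
  | zero =>
    refine (Set.finite_singleton m).subset ?_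
    rintro m' ⟨f, h0, hn, -⟩
    simp [← h0, ← hn]
  | succ n ih =>
    refine (hS.biUnion fun s _ => ih.image fun x => R.sAct x s).subset ?_
    rintro m' ⟨f, h0, hn, hstep⟩
    obtain ⟨s, hs, heq⟩ := hstep n n.lt_succ_self
    exact Set.mem_biUnion hs
      ⟨f n, ⟨f, h0, rfl, fun i hi => hstep i (hi.trans n.lt_succ_self)⟩, heq.symm.trans hn⟩

lemma IsRightGenSet.finite_ball {R : CellSpace G M} {S : Set G} (hS : R.IsRightGenSet S)
    (κ : ℕ) : (R.ball S R.m0 κ).Finite := by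
  refine ((Set.finite_Iic κ).biUnion fun n _ => R.finite_setOf_chain hS.finite R.m0 n).subset ?_
  intro m hm
  have hchain : {n : ℕ | R.Chain S R.m0 m n}.Nonempty := hS.generates m
  exact Set.mem_biUnion (show R.dist S R.m0 m ∈ Set.Iic κ from hm) (Nat.sInf_mem hchain)

end CellSpace

def IsInvariant (R : CellSpace G M) (H : Subgroup G) (Z : Set (M → Q)) : Prop :=
  ∀ h ∈ H, ∀ z ∈ Z, shiftAct R h z ∈ Z

variable {R : CellSpace G M} {H : Subgroup G}

lemma isInvariant_generated (𝔉 : Set (Σ A : Set M, A → Q)) :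
    IsInvariant R H (Generated R H 𝔉) := by
  rintro h hh c hc f hf ⟨h', hh', hocc⟩
  refine hc f hf ⟨h⁻¹ * h', H.mul_mem (H.inv_mem hh) hh', fun a => ?_⟩
  rw [R.mul_act]
  exact hocc a

lemma IsSubshift.isInvariant {X : Set (M → Q)} (hX : IsSubshift R H X) : IsInvariant R H X := by
  obtain ⟨𝔉, -, rfl⟩ := hX
  exact isInvariant_generated 𝔉

lemma mem_closure_of_forall_finset {ι α : Type*} [TopologicalSpace α] {Z : Set (ι → α)}
    {c : ι → α} (hc : ∀ I : Finset ι, ∃ z ∈ Z, ∀ i ∈ I, z i = c i) : c ∈ closure Z := by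
  rw [mem_closure_iff_nhds]
  intro t ht
  rw [nhds_pi, Filter.mem_pi'] at ht
  obtain ⟨I, u, hu, hIu⟩ := ht
  obtain ⟨z, hz, hzc⟩ := hc I
  refine ⟨z, hIu fun i hi => ?_, hz⟩
  rw [hzc i hi]
  exact mem_of_mem_nhds (hu i)

section Topology

variable [TopologicalSpace Q] [DiscreteTopology Q]

lemma isOpen_setOf_semiOccurs {A : Set M} (hA : A.Finite) (p : A → Q) :
    IsOpen {c : M → Q | SemiOccurs R H p c} := by
  have : Finite A := hA.to_subtype
  have hunion : {c : M → Q | SemiOccurs R H p c} =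
      ⋃ h ∈ H, ⋂ a : A, (fun c : M → Q => c (R.act h a)) ⁻¹' {p a} := by
    ext c
    simp [SemiOccurs]
  rw [hunion]
  exact isOpen_biUnion fun h _ => isOpen_iInter_of_finite fun a =>
    (isOpen_discrete {p a}).preimage (continuous_apply _)

lemma IsSubshift.isClosed {X : Set (M → Q)} (hX : IsSubshift R H X) : IsClosed X := by
  obtain ⟨𝔉, h𝔉, rfl⟩ := hX
  simp only [Generated, Set.ofPred_forall]
  exact isClosed_biInter fun f hf => (isOpen_setOf_semiOccurs (h𝔉 f hf) f.2).isClosed_compl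

end Topology

lemma isSubshift_of_isClosed_of_isInvariant [TopologicalSpace Q] {Z : Set (M → Q)}
    (hZ : IsClosed Z) (hZinv : IsInvariant R H Z) : IsSubshift R H Z := by
  refine ⟨{f | f.1.Finite ∧ ¬ Allowed R H Z f.2}, fun f hf => hf.1, ?_⟩
  ext c
  refine ⟨fun hc f hf hocc => hf.2 ⟨c, hc, hocc⟩, fun hc => ?_⟩
  rw [← hZ.closure_eq]
  refine mem_closure_of_forall_finset fun I => ?_
  have hallowed : Allowed R H Z ((I : Set M).domRestrict c) := by
    by_contra hna
    exact hc ⟨I, (I : Set M).domRestrict c⟩ ⟨I.finite_toSet, hna⟩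
      ⟨1, H.one_mem, fun a => by rw [R.one_act]; rfl⟩
  obtain ⟨z, hz, h, hh, hocc⟩ := hallowed
  refine ⟨shiftAct R h⁻¹ z, hZinv _ (H.inv_mem hh) z hz, fun i hi => ?_⟩
  simpa [shiftAct] using hocc ⟨i, hi⟩

namespace IsLocalMap

variable {S : Set G} {X Y : Set (M → Q)} {Δ : (M → Q) → (M → Q)} {κ : ℕ}

lemma map_shiftAct (hΔ : IsLocalMap R S H X Y Δ κ) (hH : ∀ m : M, R.coord m ∈ H)
    (hXinv : IsInvariant R H X) {x : M → Q} (hx : x ∈ X) {h : G} (hh : h ∈ H) :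
    Δ (shiftAct R h x) = shiftAct R h (Δ x) := by
  obtain ⟨-, N, -, -, δ, hδinv, hδ⟩ := hΔ
  funext m
  set m' := R.act h⁻¹ m
  -- `g₀` fixes `m₀` and carries the local coordinates at `m` to those at `m' = h⁻¹ ▷ m`
  set g₀ : G := (R.coord m')⁻¹ * (h⁻¹ * R.coord m)
  have hg₀ : R.stab g₀ := by
    show R.act ((R.coord m')⁻¹ * (h⁻¹ * R.coord m)) R.m0 = R.m0
    rw [R.mul_act, R.mul_act, R.coord_act]
    exact R.act_coord_inv m'
  have hg₀H : g₀ ∈ H := H.mul_mem (H.inv_mem (hH m')) (H.mul_mem (H.inv_mem hh) (hH m))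
  have hcoord : ∀ n : M, R.act h⁻¹ (R.nAct m n) = R.act (R.coord m') (R.act g₀ n) := by
    intro n
    simp only [R.nAct_eq_act_coord, ← R.mul_act, g₀, mul_inv_cancel_left]
  set y := shiftAct R (R.coord m')⁻¹ x
  have hy : y ∈ X := hXinv _ (H.inv_mem (hH m')) x hx
  have hδg₀ := hδinv g₀⁻¹ (H.inv_mem hg₀H) (R.stab_inv hg₀) (N.domRestrict y) ⟨y, hy, rfl⟩
    (fun n => y (R.act g₀ n)) (fun n _ _ => by simp)
  calc Δ (shiftAct R h x) m = δ (fun n : N => y (R.act g₀ n)) := by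
        rw [hδ _ (hXinv h hh x hx)]
        simp [shiftAct, y, hcoord]
    _ = δ (fun n : N => y n) := hδg₀
    _ = shiftAct R h (Δ x) m := by
        rw [shiftAct, hδ x hx]
        simp [shiftAct, y, m', R.nAct_eq_act_coord]

variable [TopologicalSpace Q] [DiscreteTopology Q]

lemma continuousOn (hΔ : IsLocalMap R S H X Y Δ κ) (hS : R.IsRightGenSet S) :
    ContinuousOn Δ X := by
  obtain ⟨-, N, hNball, -, δ, -, hδ⟩ := hΔ
  have : Finite N := ((hS.finite_ball κ).subset hNball).to_subtype
  refine continuousOn_pi.2 fun m => ?_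
  refine ((continuous_of_discreteTopology (f := δ)).comp
    (continuous_pi fun n : N => continuous_apply (R.nAct m n))).continuousOn.congr ?_
  intro x hx
  exact hδ x hx m

end IsLocalMap

theorem stmt7_general
    [Finite Q] (R : CellSpace G M) (S : Set G) (hS : R.IsRightGenSet S)
    (H : Subgroup G) (hH : ∀ m : M, R.coord m ∈ H)
    (X Y : Set (M → Q)) (hX : IsSubshift R H X)
    (Δ : (M → Q) → (M → Q)) (hΔ : ∃ κ : ℕ, IsLocalMap R S H X Y Δ κ) :
    IsSubshift R H (Δ '' X) := by
  let _ : TopologicalSpace Q := ⊥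
  have : DiscreteTopology Q := ⟨rfl⟩
  obtain ⟨κ, hΔ⟩ := hΔ
  have hXinv := hX.isInvariant
  refine isSubshift_of_isClosed_of_isInvariant ?_ ?_
  · exact (hX.isClosed.isCompact.image_of_continuousOn (hΔ.continuousOn hS)).isClosed
  · rintro h hh _ ⟨x, hx, rfl⟩
    exact ⟨shiftAct R h x, hXinv h hh x hx, hΔ.map_shiftAct hH hXinv hx hh⟩

theorem stmt7
    [Finite Q] (R : CellSpace G M) (S : Set G) (hS : R.IsRightGenSet S)
    (H : Subgroup G) (hH : ∀ m : M, R.coord m ∈ H)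
    (X Y : Set (M → Q)) (hX : IsSubshift R H X) (hY : IsSubshift R H Y)
    (Δ : (M → Q) → (M → Q)) (hΔ : ∃ κ : ℕ, IsLocalMap R S H X Y Δ κ) :
    IsSubshift R H (Δ '' X) :=
  stmt7_general R S hS H hH X Y hX Δ hΔ

end GoE
end

section
/- Let X be a non-empty κ-strongly irreducible subshift of Q^M, let F be a finite subset of M, let θ be a non-negative integer, let T be a subset of M such that d(B(t,θ), B(t',θ)) ≥ κ + 1 for all distinct t, t' ∈ T, and for each t ∈ T let p_t ∈ X_{B(t,θ)}. Let ξ be the positive integer |X_{B(θ)^{+κ}}|, let S' be the finite set T ∩ F^{-(θ+κ)}, and for each s ∈ S' let π_s : X_F → X_{B(s,θ)} be the restriction map p ↦ p↾_{B(s,θ)}. Then |X_F ∖ ⋃_{s∈S'} π_s^{-1}(p_s)| ≤ (1 − ξ^{-1})^{|S'|} · |X_F|. -/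
open Filter Set

namespace GoE

variable {G M Q : Type*}

variable [Group G]

/-! Treat the sites `s ∈ S'` one at a time. Let `A` be the set of patterns of `X_F` matching none of
the `p_t` treated so far. For `q ∈ A`, strong irreducibility overwrites `q` on `C_s = B(s,θ)^{+κ}`
by a pattern that shows `p_s`; the places where `q` fails to match an earlier `p_t` lie outside
`C_s`, by the separation of the balls, so the result is still in `A`. As `q` is determined by its
overwritten version and by `q↾C_s ∈ X_{C_s}`, and `|X_{C_s}| = ξ` by the `H`-invariance of `X`, at
least a `ξ⁻¹`-fraction of `A` shows `p_s`. So each site multiplies the count by at most `1 - ξ⁻¹`. -/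

section RelChain

variable {α β : Type*}

def RelChain (r : α → α → Prop) (a b : α) (n : ℕ) : Prop :=
  ∃ f : ℕ → α, f 0 = a ∧ f n = b ∧ ∀ i < n, r (f i) (f (i + 1))

namespace RelChain

variable {r : α → α → Prop} {a b c : α} {m n : ℕ}

theorem trans (h : RelChain r a b m) (h' : RelChain r b c n) : RelChain r a c (m + n) := by
  obtain ⟨f, rfl, rfl, hf⟩ := h
  obtain ⟨g, hg0, rfl, hg⟩ := h'
  have hlate : ∀ i, m ≤ i → (if i ≤ m then f i else g (i - m)) = g (i - m) := by
    intro i hi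
    split_ifs with him
    · obtain rfl : i = m := le_antisymm him hi
      rw [Nat.sub_self, hg0]
    · rfl
  refine ⟨fun i => if i ≤ m then f i else g (i - m), if_pos (Nat.zero_le m), ?_, fun i hi => ?_⟩
  · dsimp only
    rw [hlate _ (Nat.le_add_right m n), Nat.add_sub_cancel_left]
  · dsimp only
    rcases lt_or_ge i m with him | hmi
    · simp only [if_pos him.le, if_pos (Nat.succ_le_of_lt him)]
      exact hf i him
    · rw [hlate i hmi, hlate (i + 1) (by omega), Nat.sub_add_comm hmi]
      exact hg _ (by omega)

theorem symm (hr : ∀ a b, r a b → r b a) (h : RelChain r a b n) : RelChain r b a n := by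
  obtain ⟨f, rfl, rfl, hf⟩ := h
  refine ⟨fun i => f (n - i), by simp, by simp, fun i hi => ?_⟩
  have hstep := hf (n - (i + 1)) (by omega)
  rw [show n - (i + 1) + 1 = n - i by omega] at hstep
  exact hr _ _ hstep

theorem map {r' : β → β → Prop} (φ : α → β) (hφ : ∀ a b, r a b → r' (φ a) (φ b))
    (h : RelChain r a b n) : RelChain r' (φ a) (φ b) n := by
  obtain ⟨f, rfl, rfl, hf⟩ := h
  exact ⟨φ ∘ f, rfl, rfl, fun i hi => hφ _ _ (hf i hi)⟩

end RelChain

end RelChain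

namespace CellSpace

variable (R : CellSpace G M) {S : Set G}

theorem act_inv_act (g : G) (m : M) : R.act g⁻¹ (R.act g m) = m := by
  rw [← R.mul_act, inv_mul_cancel, R.one_act]

theorem act_act_inv (g : G) (m : M) : R.act g (R.act g⁻¹ m) = m := by
  simpa using R.act_inv_act g⁻¹ m

theorem stab_coord_inv_mul {g : G} {m : M} (h : R.act g R.m0 = m) :
    R.stab ((R.coord m)⁻¹ * g) := by
  rw [stab, R.mul_act, h, ← R.act_inv_act (R.coord m) R.m0, R.coord_act]

variable (S) in
def Adj (m m' : M) : Prop := ∃ s ∈ S, m' = R.sAct m s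

variable {R}

section Metric

variable (hS : R.IsRightGenSet S)
include hS

theorem adj_symm {m m' : M} (h : R.Adj S m m') : R.Adj S m' m := by
  obtain ⟨s, hs, rfl⟩ := h
  have hg₀ := R.stab_coord_inv_mul (rfl : R.sAct m s = _)
  refine ⟨_, hS.stab_mul _ hg₀ _ (hS.symm s hs), ?_⟩
  simp only [sAct, mul_assoc, mul_inv_cancel, mul_one, mul_inv_cancel_left, R.coord_act]

theorem adj_act (g : G) {m m' : M} (h : R.Adj S m m') : R.Adj S (R.act g m) (R.act g m') := by
  obtain ⟨s, hs, rfl⟩ := h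
  have hg₀ := R.stab_coord_inv_mul (g := g * R.coord m) (by rw [R.mul_act, R.coord_act])
  refine ⟨_, hS.stab_mul _ hg₀ s hs, ?_⟩
  simp only [sAct, ← R.mul_act, mul_assoc, mul_inv_cancel_left]

theorem relChain_exists (m m' : M) : ∃ n, RelChain (R.Adj S) m m' n := by
  obtain ⟨k, f, hf⟩ := hS.generates m
  obtain ⟨k', f', hf'⟩ := hS.generates m'
  have hm : RelChain (R.Adj S) R.m0 m k := ⟨f, hf⟩
  exact ⟨k + k', (hm.symm fun _ _ => adj_symm hS).trans ⟨f', hf'⟩⟩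

theorem relChain_dist (m m' : M) : RelChain (R.Adj S) m m' (R.dist S m m') :=
  Nat.sInf_mem (relChain_exists hS m m')

omit hS in
theorem dist_le_of_relChain {m m' : M} {n : ℕ} (h : RelChain (R.Adj S) m m' n) :
    R.dist S m m' ≤ n :=
  Nat.sInf_le h

theorem dist_comm (m m' : M) : R.dist S m m' = R.dist S m' m :=
  le_antisymm (dist_le_of_relChain ((relChain_dist hS m' m).symm fun _ _ => adj_symm hS))
    (dist_le_of_relChain ((relChain_dist hS m m').symm fun _ _ => adj_symm hS))

theorem dist_triangle (m m' m'' : M) :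
    R.dist S m m'' ≤ R.dist S m m' + R.dist S m' m'' :=
  dist_le_of_relChain ((relChain_dist hS m m').trans (relChain_dist hS m' m''))

theorem dist_act_le (g : G) (m m' : M) : R.dist S (R.act g m) (R.act g m') ≤ R.dist S m m' :=
  dist_le_of_relChain ((relChain_dist hS m m').map _ fun _ _ => adj_act hS g)

theorem dist_act (g : G) (m m' : M) : R.dist S (R.act g m) (R.act g m') = R.dist S m m' := by
  refine le_antisymm (dist_act_le hS g m m') ?_
  simpa only [R.act_inv_act] using dist_act_le hS g⁻¹ (R.act g m) (R.act g m')

theorem preimage_act_ball (g : G) (m : M) (ρ : ℕ) :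
    R.act g ⁻¹' R.ball S (R.act g m) ρ = R.ball S m ρ := by
  ext m'
  simp only [ball, mem_preimage, mem_ofPred_eq, dist_act hS]

theorem preimage_act_clos (g : G) (A : Set M) (κ : ℕ) :
    R.act g ⁻¹' R.clos S A κ = R.clos S (R.act g ⁻¹' A) κ := by
  ext m
  constructor
  · rintro ⟨b, hb, hbA⟩
    refine ⟨R.act g⁻¹ b, ?_, by rwa [mem_preimage, R.act_act_inv]⟩
    rwa [ball, mem_ofPred_eq, ← dist_act hS g, R.act_act_inv]
  · rintro ⟨b, hb, hbA⟩
    exact ⟨R.act g b, (dist_act hS g m b).trans_le hb, hbA⟩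

theorem clos_ball_subset_ball (m : M) (θ κ : ℕ) :
    R.clos S (R.ball S m θ) κ ⊆ R.ball S m (θ + κ) := by
  rintro m' ⟨b, hb, hbm⟩
  calc R.dist S m m' ≤ R.dist S m b + R.dist S b m' := dist_triangle hS m b m'
    _ ≤ θ + κ := Nat.add_le_add hbm (by rw [dist_comm hS]; exact hb)

end Metric

end CellSpace

variable {R : CellSpace G M} {S : Set G} {H : Subgroup G} {X : Set (M → Q)}

theorem IsSubshift.shiftAct_mem (hX : IsSubshift R H X) {h : G} (hh : h ∈ H) {x : M → Q}
    (hx : x ∈ X) : shiftAct R h x ∈ X := by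
  obtain ⟨𝔉, -, rfl⟩ := hX
  rintro f hf ⟨h', hh', hocc⟩
  refine hx f hf ⟨h⁻¹ * h', mul_mem (inv_mem hh) hh', fun a => ?_⟩
  rw [R.mul_act]
  exact hocc a

theorem IsSubshift.ncard_restr_preimage_act (hX : IsSubshift R H X) {g : G} (hg : g ∈ H)
    (A : Set M) : (restr (R.act g ⁻¹' A) X).ncard = (restr A X).ncard := by
  refine (ncard_congr (fun q _ (a : ↥(R.act g ⁻¹' A)) => q ⟨R.act g a, a.2⟩) ?_ ?_ ?_).symm
  · rintro _ ⟨x, hx, rfl⟩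
    refine ⟨shiftAct R g⁻¹ x, hX.shiftAct_mem (inv_mem hg) hx, ?_⟩
    funext a
    show x (R.act g⁻¹⁻¹ a) = x (R.act g a)
    rw [inv_inv]
  · rintro _ _ ⟨x, -, rfl⟩ ⟨x', -, rfl⟩ h
    funext ⟨a, ha⟩
    have := congrFun h ⟨R.act g⁻¹ a, by rwa [mem_preimage, R.act_act_inv]⟩
    simpa [R.act_act_inv] using this
  · rintro _ ⟨x, hx, rfl⟩
    refine ⟨_, ⟨shiftAct R g x, hX.shiftAct_mem hg hx, rfl⟩, ?_⟩
    funext a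
    show x (R.act g⁻¹ (R.act g a)) = x a
    rw [R.act_inv_act]

theorem allowed_restrict {x : M → Q} (hx : x ∈ X) (A : Set M) : Allowed R H X (A.restrict x) :=
  ⟨x, hx, 1, one_mem H, fun a => by rw [R.one_act]; rfl⟩

theorem IsStronglyIrr.exists_eqOn {κ : ℕ} (hsi : IsStronglyIrr R S H X κ) {A B : Set M}
    (hA : A.Finite) (hB : B.Finite) {x y : M → Q} (hx : x ∈ X) (hy : y ∈ X)
    (hAB : ∀ a ∈ A, ∀ b ∈ B, κ + 1 ≤ R.dist S a b) :
    ∃ z ∈ X, EqOn z x A ∧ EqOn z y B := by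
  obtain ⟨z, hz, hzA, hzB⟩ :=
    hsi A B hA hB _ _ (allowed_restrict hx A) (allowed_restrict hy B) hAB
  exact ⟨z, hz, fun a ha => congrFun hzA ⟨a, ha⟩, fun b hb => congrFun hzB ⟨b, hb⟩⟩

theorem ncard_sdiff_le_of_injOn {α γ : Type*} {A E : Set α} {B : Set γ} (hA : A.Finite)
    (hB : B.Finite) (Φ : α → α) (π : α → γ) (hΦ : MapsTo Φ A (A ∩ E)) (hπ : MapsTo π A B)
    (hinj : InjOn (fun a => (Φ a, π a)) A) :
    ((A \ E).ncard : ℝ) ≤ (1 - (B.ncard : ℝ)⁻¹) * A.ncard := by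
  have hle : A.ncard ≤ (A ∩ E).ncard * B.ncard := by
    rw [← ncard_prod]
    exact ncard_le_ncard_of_injOn _ (fun a ha => ⟨hΦ ha, hπ ha⟩) hinj
      ((hA.inter_of_left E).prod hB)
  have hsplit : ((A ∩ E).ncard : ℝ) + (A \ E).ncard = A.ncard := by
    exact_mod_cast ncard_inter_add_ncard_sdiff_eq_ncard A E hA
  rcases B.ncard.eq_zero_or_pos with hB0 | hBpos
  · simp only [hB0, Nat.cast_zero, inv_zero, sub_zero, one_mul]
    linarith [((A ∩ E).ncard.cast_nonneg : (0 : ℝ) ≤ _)]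
  · have hfrac : (A.ncard : ℝ) * (B.ncard : ℝ)⁻¹ ≤ (A ∩ E).ncard := by
      rw [mul_inv_le_iff₀ (by exact_mod_cast hBpos)]
      exact_mod_cast hle
    linarith [show (1 - (B.ncard : ℝ)⁻¹) * A.ncard = A.ncard - A.ncard * (B.ncard : ℝ)⁻¹ by ring]

theorem ncard_sdiff_biUnion_le_pow {α ι : Type*} (A : Set α) (E : ι → Set α) {I : Set ι}
    (hI : I.Finite) {c : ℝ} (hc : 0 ≤ c)
    (hstep : ∀ s ∈ I, ∀ U ⊆ I, s ∉ U →
      (((A \ ⋃ t ∈ U, E t) \ E s).ncard : ℝ) ≤ c * (A \ ⋃ t ∈ U, E t).ncard) :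
    ((A \ ⋃ t ∈ I, E t).ncard : ℝ) ≤ c ^ I.ncard * A.ncard := by
  refine Set.Finite.induction_on_subset I hI (motive := fun U _ =>
    ((A \ ⋃ t ∈ U, E t).ncard : ℝ) ≤ c ^ U.ncard * A.ncard) (by simp) ?_
  intro s U hsI hUI hsU ih
  rw [biUnion_insert, union_comm, ← sdiff_sdiff, ncard_insert_of_notMem hsU (hI.subset hUI),
    pow_succ, mul_comm _ c, mul_assoc]
  exact (hstep s hsI U hUI hsU).trans (mul_le_mul_of_nonneg_left ih hc)

-- `{q | Compatible q (p s)}` is the fibre `π_s⁻¹(p_s)`.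
def Compatible {A B : Set M} (q : A → Q) (p : B → Q) : Prop :=
  ∀ (m : M) (hm : m ∈ B) (hmA : m ∈ A), q ⟨m, hmA⟩ = p ⟨m, hm⟩

section Replacement

variable {κ θ : ℕ} {F T U : Set M} {p : (t : M) → ↥(R.ball S t θ) → Q} {s : M}

theorem notMem_clos_ball_of_separated
    (hT : ∀ t ∈ T, ∀ t' ∈ T, t ≠ t' →
      ∀ a ∈ R.ball S t θ, ∀ b ∈ R.ball S t' θ, κ + 1 ≤ R.dist S a b)
    {t : M} (ht : t ∈ T) (hs : s ∈ T) (hts : t ≠ s) {m : M} (hm : m ∈ R.ball S t θ) :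
    m ∉ R.clos S (R.ball S s θ) κ := by
  rintro ⟨b, hmb, hb⟩
  have hsep := hT t ht s hs hts m hm b hb
  have hmb' : R.dist S m b ≤ κ := hmb
  omega

theorem exists_compatible_eq_off_clos (hsi : IsStronglyIrr R S H X κ) (hF : F.Finite)
    (hT : ∀ t ∈ T, ∀ t' ∈ T, t ≠ t' →
      ∀ a ∈ R.ball S t θ, ∀ b ∈ R.ball S t' θ, κ + 1 ≤ R.dist S a b)
    (hp : ∀ t ∈ T, p t ∈ restr (R.ball S t θ) X)
    (hsT : s ∈ T) (hsF : s ∈ R.inter S F (θ + κ)) (hUT : U ⊆ T) (hsU : s ∉ U)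
    {q : F → Q} (hq : q ∈ restr F X \ ⋃ t ∈ U, {q' : F → Q | Compatible q' (p t)}) :
    ∃ r ∈ (restr F X \ ⋃ t ∈ U, {q' : F → Q | Compatible q' (p t)}) ∩
        {q' | Compatible q' (p s)},
      ∀ (m : M) (hmF : m ∈ F), m ∉ R.clos S (R.ball S s θ) κ → r ⟨m, hmF⟩ = q ⟨m, hmF⟩ := by
  obtain ⟨⟨x, hx, rfl⟩, hxU⟩ := hq
  obtain ⟨y, hy, hyp⟩ := hp s hsT
  set C := R.clos S (R.ball S s θ) κ
  have hBF : R.ball S s θ ⊆ F := fun m hm => hsF.2 (le_trans hm (Nat.le_add_right θ κ))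
  have hsep : ∀ a ∈ F \ C, ∀ b ∈ R.ball S s θ, κ + 1 ≤ R.dist S a b := by
    intro a ha b hb
    by_contra! hab
    exact ha.2 ⟨b, Nat.le_of_lt_succ hab, hb⟩
  obtain ⟨z, hz, hzx, hzy⟩ :=
    hsi.exists_eqOn (hF.subset sdiff_subset) (hF.subset hBF) hx hy hsep
  refine ⟨F.restrict z, ⟨⟨⟨z, hz, rfl⟩, ?_⟩, ?_⟩, fun m hmF hmC => hzx ⟨hmF, hmC⟩⟩
  · simp only [mem_iUnion, mem_ofPred_eq, not_exists]
    intro t htU hzt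
    refine hxU (mem_biUnion htU fun m hm hmF => ?_)
    have hmC := notMem_clos_ball_of_separated hT (hUT htU) hsT (ne_of_mem_of_not_mem htU hsU) hm
    rw [← hzt m hm hmF]
    exact (hzx ⟨hmF, hmC⟩).symm
  · intro m hm hmF
    rw [← hyp]
    exact hzy hm

variable [Finite Q]

theorem ncard_sdiff_compatible_le (hS : R.IsRightGenSet S) (hH : ∀ m : M, R.coord m ∈ H)
    (hX : IsSubshift R H X) (hsi : IsStronglyIrr R S H X κ) (hF : F.Finite)
    (hT : ∀ t ∈ T, ∀ t' ∈ T, t ≠ t' →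
      ∀ a ∈ R.ball S t θ, ∀ b ∈ R.ball S t' θ, κ + 1 ≤ R.dist S a b)
    (hp : ∀ t ∈ T, p t ∈ restr (R.ball S t θ) X)
    (hsT : s ∈ T) (hsF : s ∈ R.inter S F (θ + κ)) (hUT : U ⊆ T) (hsU : s ∉ U) :
    (((restr F X \ ⋃ t ∈ U, {q : F → Q | Compatible q (p t)}) \
        {q | Compatible q (p s)}).ncard : ℝ) ≤
      (1 - ((restr (R.clos S (R.ball S R.m0 θ) κ) X).ncard : ℝ)⁻¹) *
        (restr F X \ ⋃ t ∈ U, {q : F → Q | Compatible q (p t)}).ncard := by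
  set C := R.clos S (R.ball S s θ) κ
  have hCF : C ⊆ F := (CellSpace.clos_ball_subset_ball hS s θ κ).trans hsF.2
  have : Finite F := hF.to_subtype
  have : Finite C := (hF.subset hCF).to_subtype
  have hball : R.act (R.coord s) ⁻¹' R.ball S s θ = R.ball S R.m0 θ := by
    simpa only [R.coord_act] using CellSpace.preimage_act_ball hS (R.coord s) R.m0 θ
  have hξ : (restr C X).ncard = (restr (R.clos S (R.ball S R.m0 θ) κ) X).ncard := by
    rw [← hX.ncard_restr_preimage_act (hH s), CellSpace.preimage_act_clos hS, hball]
  choose! Φ hΦ using fun q hq =>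
    exists_compatible_eq_off_clos (H := H) hsi hF hT hp hsT hsF hUT hsU (q := q) hq
  rw [← hξ]
  refine ncard_sdiff_le_of_injOn (toFinite _) (toFinite _) Φ (fun q (c : C) => q ⟨c, hCF c.2⟩)
    (fun q hq => (hΦ q hq).1) ?_ ?_
  · rintro _ ⟨⟨x, hx, rfl⟩, -⟩
    exact ⟨x, hx, rfl⟩
  · intro q hq q' hq' h
    simp only [Prod.mk.injEq] at h
    funext ⟨m, hmF⟩
    by_cases hmC : m ∈ C
    · exact congrFun h.2 ⟨m, hmC⟩
    · rw [← (hΦ q hq).2 m hmF hmC, h.1, (hΦ q' hq').2 m hmF hmC]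

end Replacement

theorem stmt9_general
    [Finite Q] (R : CellSpace G M) (S : Set G) (hS : R.IsRightGenSet S)
    (H : Subgroup G) (hH : ∀ m : M, R.coord m ∈ H)
    (X : Set (M → Q)) (hX : IsSubshift R H X)
    (κ : ℕ) (hsi : IsStronglyIrr R S H X κ)
    (F : Set M) (hF : F.Finite) (θ : ℕ)
    (T : Set M)
    (hT : ∀ t ∈ T, ∀ t' ∈ T, t ≠ t' →
      ∀ a ∈ R.ball S t θ, ∀ b ∈ R.ball S t' θ, κ + 1 ≤ R.dist S a b)
    (p : (t : M) → ↥(R.ball S t θ) → Q)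
    (hp : ∀ t ∈ T, p t ∈ restr (R.ball S t θ) X) :
    ((restr F X \ ⋃ s ∈ T ∩ R.inter S F (θ + κ),
        {q : ↥F → Q |
          ∀ (m : M) (hm : m ∈ R.ball S s θ) (hmF : m ∈ F),
            q ⟨m, hmF⟩ = p s ⟨m, hm⟩}).ncard : ℝ) ≤
      (1 - ((restr (R.clos S (R.ball S R.m0 θ) κ) X).ncard : ℝ)⁻¹) ^
          (T ∩ R.inter S F (θ + κ)).ncard *
        ((restr F X).ncard : ℝ) := by
  refine ncard_sdiff_biUnion_le_pow _ (fun s => {q : F → Q | Compatible q (p s)})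
    (hF.subset fun t ht => ht.2.1) (sub_nonneg.2 (Nat.cast_inv_le_one _)) ?_
  rintro s ⟨hsT, hsF⟩ U hU hsU
  exact ncard_sdiff_compatible_le hS hH hX hsi hF hT hp hsT hsF (fun t ht => (hU ht).1) hsU

theorem stmt9
    [Finite Q] (R : CellSpace G M) (S : Set G) (hS : R.IsRightGenSet S)
    (H : Subgroup G) (hH : ∀ m : M, R.coord m ∈ H)
    (X : Set (M → Q)) (hX : IsSubshift R H X) (hXne : X.Nonempty)
    (κ : ℕ) (hsi : IsStronglyIrr R S H X κ)
    (F : Set M) (hF : F.Finite) (θ : ℕ)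
    (T : Set M)
    (hT : ∀ t ∈ T, ∀ t' ∈ T, t ≠ t' →
      ∀ a ∈ R.ball S t θ, ∀ b ∈ R.ball S t' θ, κ + 1 ≤ R.dist S a b)
    (p : (t : M) → ↥(R.ball S t θ) → Q)
    (hp : ∀ t ∈ T, p t ∈ restr (R.ball S t θ) X) :
    ((restr F X \ ⋃ s ∈ T ∩ R.inter S F (θ + κ),
        {q : ↥F → Q |
          ∀ (m : M) (hm : m ∈ R.ball S s θ) (hmF : m ∈ F),
            q ⟨m, hmF⟩ = p s ⟨m, hm⟩}).ncard : ℝ) ≤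
      (1 - ((restr (R.clos S (R.ball S R.m0 θ) κ) X).ncard : ℝ)⁻¹) ^
          (T ∩ R.inter S F (θ + κ)).ncard *
        ((restr F X).ncard : ℝ) :=
  stmt9_general R S hS H hH X hX κ hsi F hF θ T hT p hp

end GoE
end
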